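/- Let U ⊆ ℝ² be a nonempty connected open set, K ∈ ℝ, and let a : U → ℝ be a smooth solution of the Liouville equation ∂²a/∂(u^1)² + ∂²a/∂(u^2)² = 2K e^{−a} on U, so that g_1^{ij}(u) = e^{a(u)} δ^{ij} is a metric of constant Riemannian curvature K and g_2^{ij}(u) = δ^{ij} is flat. Then g_1 and g_2 are always almost compatible; and if g_1 and g_2 are compatible, then a is constant and K = 0. -/

import Mathlib

open scoped BigOperators

/-- Partial derivative of a scalar function on `ℝ^N` in the `j`-th coordinate direction. -/
noncomputable def pd {N : ℕ} (f : (Fin N → ℝ) → ℝ) (j : Fin N) (u : Fin N → ℝ) : ℝ :=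
  fderiv ℝ f u (Pi.single j 1)

/-- Christoffel symbols `Γ^i_{jk}` of a contravariant metric `g` (with lower metric `g⁻¹`). -/
noncomputable def christoffelLow {N : ℕ} (g : (Fin N → ℝ) → Matrix (Fin N) (Fin N) ℝ)
    (i j k : Fin N) (u : Fin N → ℝ) : ℝ :=
  (1 / 2) * ∑ s, g u i s *
    (pd (fun v => (g v)⁻¹ s k) j u + pd (fun v => (g v)⁻¹ j s) k u
      - pd (fun v => (g v)⁻¹ j k) s u)

/-- Christoffel symbols with raised index `Γ^{ij}_k = g^{is} Γ^j_{sk}`. -/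
noncomputable def christoffelUp {N : ℕ} (g : (Fin N → ℝ) → Matrix (Fin N) (Fin N) ℝ)
    (i j k : Fin N) (u : Fin N → ℝ) : ℝ :=
  ∑ s, g u i s * christoffelLow g j s k u

/-- Riemann curvature tensor `R^i_{jkl}`. -/
noncomputable def riemannLow {N : ℕ} (g : (Fin N → ℝ) → Matrix (Fin N) (Fin N) ℝ)
    (i j k l : Fin N) (u : Fin N → ℝ) : ℝ :=
  pd (christoffelLow g i j l) k u - pd (christoffelLow g i j k) l u
    + ∑ p, christoffelLow g i p k u * christoffelLow g p j l u
    - ∑ p, christoffelLow g i p l u * christoffelLow g p j k u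

/-- Riemann curvature tensor with raised index `R^{ij}_{kl} = g^{is} R^j_{skl}`. -/
noncomputable def riemannUp {N : ℕ} (g : (Fin N → ℝ) → Matrix (Fin N) (Fin N) ℝ)
    (i j k l : Fin N) (u : Fin N → ℝ) : ℝ :=
  ∑ s, g u i s * riemannLow g j s k l u

/-- A smooth contravariant metric on `U`: smooth, symmetric and invertible at every point. -/
def IsMetricOn {N : ℕ} (U : Set (Fin N → ℝ))
    (g : (Fin N → ℝ) → Matrix (Fin N) (Fin N) ℝ) : Prop :=
  (∀ i j, ContDiffOn ℝ (⊤ : ℕ∞) (fun u => g u i j) U) ∧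
  (∀ u ∈ U, (g u).IsSymm) ∧ (∀ u ∈ U, IsUnit (g u).det)

/-- Almost compatibility of two contravariant metrics on `U`. -/
def AlmostCompatibleOn {N : ℕ} (U : Set (Fin N → ℝ))
    (g₁ g₂ : (Fin N → ℝ) → Matrix (Fin N) (Fin N) ℝ) : Prop :=
  ∀ l₁ l₂ : ℝ, (∀ u ∈ U, IsUnit (l₁ • g₁ u + l₂ • g₂ u).det) →
    ∀ u ∈ U, ∀ i j k, christoffelUp (fun v => l₁ • g₁ v + l₂ • g₂ v) i j k u =
      l₁ * christoffelUp g₁ i j k u + l₂ * christoffelUp g₂ i j k u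

/-- Compatibility of two contravariant metrics on `U`. -/
def CompatibleOn {N : ℕ} (U : Set (Fin N → ℝ))
    (g₁ g₂ : (Fin N → ℝ) → Matrix (Fin N) (Fin N) ℝ) : Prop :=
  ∀ l₁ l₂ : ℝ, (∀ u ∈ U, IsUnit (l₁ • g₁ u + l₂ • g₂ u).det) →
    ∀ u ∈ U,
      (∀ i j k, christoffelUp (fun v => l₁ • g₁ v + l₂ • g₂ v) i j k u =
        l₁ * christoffelUp g₁ i j k u + l₂ * christoffelUp g₂ i j k u) ∧
      (∀ i j k l, riemannUp (fun v => l₁ • g₁ v + l₂ • g₂ v) i j k l u =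
        l₁ * riemannUp g₁ i j k l u + l₂ * riemannUp g₂ i j k l u)

/-- Nijenhuis tensor `N^k_{ij}` of an affinor `v^i_j(u)`. -/
noncomputable def nijenhuis {N : ℕ} (v : (Fin N → ℝ) → Matrix (Fin N) (Fin N) ℝ)
    (k i j : Fin N) (u : Fin N → ℝ) : ℝ :=
  ∑ s, (v u s i * pd (fun w => v w k j) s u - v u s j * pd (fun w => v w k i) s u
    + v u k s * pd (fun w => v w s i) j u - v u k s * pd (fun w => v w s j) i u)

/-- The affinor `v^i_j = g₁^{is} g_{2,sj}` of a pair of contravariant metrics. -/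
noncomputable def affinor {N : ℕ} (g₁ g₂ : (Fin N → ℝ) → Matrix (Fin N) (Fin N) ℝ)
    (u : Fin N → ℝ) : Matrix (Fin N) (Fin N) ℝ :=
  g₁ u * (g₂ u)⁻¹

/-- A nonsingular pair of metrics: at every point the roots of
`det(g₁ - λ g₂) = 0` are real and pairwise distinct. -/
def NonsingularPairOn {N : ℕ} (U : Set (Fin N → ℝ))
    (g₁ g₂ : (Fin N → ℝ) → Matrix (Fin N) (Fin N) ℝ) : Prop :=
  ∀ u ∈ U, ∃ ev : Fin N → ℝ, Function.Injective ev ∧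
    ∀ i, (g₁ u - ev i • g₂ u).det = 0

/-- Flatness of a contravariant metric on `U`. -/
def IsFlatOn {N : ℕ} (U : Set (Fin N → ℝ))
    (g : (Fin N → ℝ) → Matrix (Fin N) (Fin N) ℝ) : Prop :=
  ∀ u ∈ U, ∀ i j k l, riemannLow g i j k l u = 0

/-- Constant Riemannian curvature `K` on `U`. -/
def HasConstCurvatureOn {N : ℕ} (U : Set (Fin N → ℝ))
    (g : (Fin N → ℝ) → Matrix (Fin N) (Fin N) ℝ) (K : ℝ) : Prop :=
  ∀ u ∈ U, ∀ i j k l, riemannUp g i j k l u =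
    K * ((if i = l then (1 : ℝ) else 0) * (if j = k then (1 : ℝ) else 0)
      - (if i = k then (1 : ℝ) else 0) * (if j = l then (1 : ℝ) else 0))

/-- The tensor `M^{ijk}` of a pair of contravariant metrics. -/
noncomputable def MTensor {N : ℕ} (g₁ g₂ : (Fin N → ℝ) → Matrix (Fin N) (Fin N) ℝ)
    (i j k : Fin N) (u : Fin N → ℝ) : ℝ :=
  ∑ s, (g₁ u i s * christoffelUp g₂ j k s u - g₂ u j s * christoffelUp g₁ i k s u
    - g₁ u j s * christoffelUp g₂ i k s u + g₂ u i s * christoffelUp g₁ j k s u)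

section LiouvilleAux

open Filter

theorem pd_of_hasFDerivAt {u : Fin 2 → ℝ} {f : (Fin 2 → ℝ) → ℝ} {L : (Fin 2 → ℝ) →L[ℝ] ℝ}
    (h : HasFDerivAt f L u) (j : Fin 2) : pd f j u = L (Pi.single j 1) := by
  rw [pd, h.fderiv]

theorem pd_const {u : Fin 2 → ℝ} (c : ℝ) (j : Fin 2) : pd (fun _ => c) j u = 0 := by
  simp [pd]

theorem pd_congr {u : Fin 2 → ℝ} {f g : (Fin 2 → ℝ) → ℝ} (h : f =ᶠ[nhds u] g) (j : Fin 2) :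
    pd f j u = pd g j u := by
  rw [pd, pd, h.fderiv_eq]

theorem diag_inv_apply (r : ℝ) (s k : Fin 2) :
    (Matrix.diagonal (fun _ : Fin 2 => r))⁻¹ s k = if s = k then r⁻¹ else 0 := by
  rcases eq_or_ne r 0 with rfl | hr
  · rw [show (Matrix.diagonal (fun _ : Fin 2 => (0:ℝ))) = 0 by simp,
      show ((0 : Matrix (Fin 2) (Fin 2) ℝ))⁻¹ = 0 by
        rw [Matrix.inv_def, Matrix.det_zero, Ring.inverse_zero, zero_smul]]
    simp
  · rw [Matrix.inv_eq_right_inv (B := Matrix.diagonal (fun _ : Fin 2 => r⁻¹)) (by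
      rw [Matrix.diagonal_mul_diagonal]
      simp [mul_inv_cancel₀ hr]), Matrix.diagonal_apply]

theorem pd_inv_entry (a : (Fin 2 → ℝ) → ℝ) (c₁ c₂ : ℝ) {u : Fin 2 → ℝ}
    (hd : DifferentiableAt ℝ a u) (hf : c₁ * Real.exp (a u) + c₂ ≠ 0) (s k j : Fin 2) :
    pd (fun v => (Matrix.diagonal (fun _ : Fin 2 => c₁ * Real.exp (a v) + c₂))⁻¹ s k) j u
      = (if s = k then (1:ℝ) else 0)
          * (-(c₁ * Real.exp (a u)) / (c₁ * Real.exp (a u) + c₂) ^ 2) * pd a j u := by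
  have hfun : (fun v => (Matrix.diagonal (fun _ : Fin 2 => c₁ * Real.exp (a v) + c₂))⁻¹ s k)
      = fun v => if s = k then (c₁ * Real.exp (a v) + c₂)⁻¹ else 0 := by
    funext v; rw [diag_inv_apply]
  rw [hfun]
  by_cases hsk : s = k
  · simp only [if_pos hsk, one_mul]
    have h1 : HasDerivAt (fun t : ℝ => (c₁ * Real.exp t + c₂)⁻¹)
        (-(c₁ * Real.exp (a u)) / (c₁ * Real.exp (a u) + c₂) ^ 2) (a u) :=
      (((Real.hasDerivAt_exp (a u)).const_mul c₁).add_const c₂).inv hf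
    have h2 : HasFDerivAt (fun v => (c₁ * Real.exp (a v) + c₂)⁻¹)
        ((-(c₁ * Real.exp (a u)) / (c₁ * Real.exp (a u) + c₂) ^ 2) • fderiv ℝ a u) u :=
      h1.comp_hasFDerivAt u hd.hasFDerivAt
    rw [pd_of_hasFDerivAt h2]
    simp [pd, smul_eq_mul]
  · simp only [if_neg hsk, pd_const, zero_mul]

theorem christoffelLow_diag (a : (Fin 2 → ℝ) → ℝ) (c₁ c₂ : ℝ)
    {g : (Fin 2 → ℝ) → Matrix (Fin 2) (Fin 2) ℝ}
    (hg : g = fun v => Matrix.diagonal (fun _ : Fin 2 => c₁ * Real.exp (a v) + c₂))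
    {u : Fin 2 → ℝ} (hd : DifferentiableAt ℝ a u)
    (hf : c₁ * Real.exp (a u) + c₂ ≠ 0) (i j k : Fin 2) :
    christoffelLow g i j k u =
      -(c₁ * Real.exp (a u)) / (2 * (c₁ * Real.exp (a u) + c₂)) *
        ((if i = k then (1:ℝ) else 0) * pd a j u + (if i = j then (1:ℝ) else 0) * pd a k u
          - (if j = k then (1:ℝ) else 0) * pd a i u) := by
  subst hg
  simp only [christoffelLow, Fin.sum_univ_two, Matrix.diagonal_apply,
    pd_inv_entry a c₁ c₂ hd hf]
  fin_cases i <;> fin_cases j <;> fin_cases k <;>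
    · norm_num
      field_simp

theorem christoffelUp_diag (a : (Fin 2 → ℝ) → ℝ) (c₁ c₂ : ℝ)
    {g : (Fin 2 → ℝ) → Matrix (Fin 2) (Fin 2) ℝ}
    (hg : g = fun v => Matrix.diagonal (fun _ : Fin 2 => c₁ * Real.exp (a v) + c₂))
    {u : Fin 2 → ℝ} (hd : DifferentiableAt ℝ a u)
    (hf : c₁ * Real.exp (a u) + c₂ ≠ 0) (i j k : Fin 2) :
    christoffelUp g i j k u =
      -(c₁ * Real.exp (a u)) / 2 *
        ((if j = k then (1:ℝ) else 0) * pd a i u + (if i = j then (1:ℝ) else 0) * pd a k u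
          - (if i = k then (1:ℝ) else 0) * pd a j u) := by
  simp only [christoffelUp, Fin.sum_univ_two, christoffelLow_diag a c₁ c₂ hg hd hf]
  subst hg
  simp only [Matrix.diagonal_apply]
  fin_cases i <;> fin_cases j <;> fin_cases k <;>
    · norm_num
      field_simp

theorem christoffelLow_one (i j k : Fin 2) :
    christoffelLow (fun _ : Fin 2 → ℝ => (1 : Matrix (Fin 2) (Fin 2) ℝ)) i j k
      = fun _ => 0 := by
  funext u
  simp [christoffelLow, pd_const]

theorem christoffelUp_one (i j k : Fin 2) (u : Fin 2 → ℝ) :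
    christoffelUp (fun _ : Fin 2 → ℝ => (1 : Matrix (Fin 2) (Fin 2) ℝ)) i j k u = 0 := by
  simp [christoffelUp, christoffelLow_one]

theorem riemannUp_one (i j k l : Fin 2) (u : Fin 2 → ℝ) :
    riemannUp (fun _ : Fin 2 → ℝ => (1 : Matrix (Fin 2) (Fin 2) ℝ)) i j k l u = 0 := by
  simp [riemannUp, riemannLow, christoffelLow_one, pd_const]

theorem contDiffAt_pd {a : (Fin 2 → ℝ) → ℝ} {u : Fin 2 → ℝ}
    (h : ContDiffAt ℝ (⊤ : ℕ∞) a u) (n : Fin 2) : ContDiffAt ℝ (⊤ : ℕ∞) (pd a n) u := by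
  have h1 : ContDiffAt ℝ (⊤ : ℕ∞) (fderiv ℝ a) u := h.fderiv_right (by simp)
  exact (ContinuousLinearMap.apply ℝ ℝ (Pi.single n 1)).contDiff.contDiffAt.comp u h1

/-- the local formula for the Christoffel symbols of `diag (e^a + c₂)`. -/
noncomputable def Gam (a : (Fin 2 → ℝ) → ℝ) (c₂ : ℝ) (i j k : Fin 2) (v : Fin 2 → ℝ) : ℝ :=
  -(1 * Real.exp (a v)) / (2 * (1 * Real.exp (a v) + c₂)) *
    ((if i = k then (1:ℝ) else 0) * pd a j v + (if i = j then (1:ℝ) else 0) * pd a k v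
      - (if j = k then (1:ℝ) else 0) * pd a i v)

theorem pd_Gam {a : (Fin 2 → ℝ) → ℝ} {u : Fin 2 → ℝ} (h : ContDiffAt ℝ (⊤ : ℕ∞) a u)
    {c₂ : ℝ} (hf : 1 * Real.exp (a u) + c₂ ≠ 0) (i j k m : Fin 2) :
    pd (Gam a c₂ i j k) m u =
      (-(1 * Real.exp (a u)) * (2 * (1 * Real.exp (a u) + c₂))
            - -(1 * Real.exp (a u)) * (2 * (1 * Real.exp (a u)))) /
          (2 * (1 * Real.exp (a u) + c₂)) ^ 2 * pd a m u *
        ((if i = k then (1:ℝ) else 0) * pd a j u + (if i = j then (1:ℝ) else 0) * pd a k u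
          - (if j = k then (1:ℝ) else 0) * pd a i u)
      + -(1 * Real.exp (a u)) / (2 * (1 * Real.exp (a u) + c₂)) *
        ((if i = k then (1:ℝ) else 0) * pd (pd a j) m u
          + (if i = j then (1:ℝ) else 0) * pd (pd a k) m u
          - (if j = k then (1:ℝ) else 0) * pd (pd a i) m u) := by
  have hpd : ∀ n : Fin 2, HasFDerivAt (pd a n) (fderiv ℝ (pd a n) u) u :=
    fun n => ((contDiffAt_pd h n).differentiableAt (by simp)).hasFDerivAt
  have hda : HasFDerivAt a (fderiv ℝ a u) u := (h.differentiableAt (by simp)).hasFDerivAt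
  have hnum : HasDerivAt (fun t : ℝ => -(1 * Real.exp t)) (-(1 * Real.exp (a u))) (a u) :=
    ((Real.hasDerivAt_exp (a u)).const_mul 1).neg
  have hden : HasDerivAt (fun t : ℝ => 2 * (1 * Real.exp t + c₂))
      (2 * (1 * Real.exp (a u))) (a u) :=
    (((Real.hasDerivAt_exp (a u)).const_mul 1).add_const c₂).const_mul 2
  have hdenne : 2 * (1 * Real.exp (a u) + c₂) ≠ 0 := mul_ne_zero two_ne_zero hf
  have hphi0 : HasDerivAt (fun t : ℝ => -(1 * Real.exp t) / (2 * (1 * Real.exp t + c₂)))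
      ((-(1 * Real.exp (a u)) * (2 * (1 * Real.exp (a u) + c₂))
        - -(1 * Real.exp (a u)) * (2 * (1 * Real.exp (a u))))
        / (2 * (1 * Real.exp (a u) + c₂)) ^ 2) (a u) := hnum.div hden hdenne
  have hphi : HasFDerivAt (fun v => -(1 * Real.exp (a v)) / (2 * (1 * Real.exp (a v) + c₂)))
      (((-(1 * Real.exp (a u)) * (2 * (1 * Real.exp (a u) + c₂))
        - -(1 * Real.exp (a u)) * (2 * (1 * Real.exp (a u))))
        / (2 * (1 * Real.exp (a u) + c₂)) ^ 2) • fderiv ℝ a u) u :=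
    hphi0.comp_hasFDerivAt u hda
  have hS : HasFDerivAt (fun v =>
      (if i = k then (1:ℝ) else 0) * pd a j v + (if i = j then (1:ℝ) else 0) * pd a k v
        - (if j = k then (1:ℝ) else 0) * pd a i v)
      ((if i = k then (1:ℝ) else 0) • fderiv ℝ (pd a j) u
        + (if i = j then (1:ℝ) else 0) • fderiv ℝ (pd a k) u
        - (if j = k then (1:ℝ) else 0) • fderiv ℝ (pd a i) u) u :=
    (((hpd j).const_mul _).add ((hpd k).const_mul _)).sub ((hpd i).const_mul _)
  have hG : HasFDerivAt (Gam a c₂ i j k) _ u := hphi.mul hS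
  rw [pd_of_hasFDerivAt hG]
  simp only [ContinuousLinearMap.add_apply, ContinuousLinearMap.sub_apply,
    ContinuousLinearMap.smul_apply, smul_eq_mul, pd]
  ring

theorem riemannUp_diag {U : Set (Fin 2 → ℝ)} (hU : IsOpen U) {a : (Fin 2 → ℝ) → ℝ}
    (ha : ContDiffOn ℝ (⊤ : ℕ∞) a U) (c₂ : ℝ) (hc₂ : 0 ≤ c₂)
    {g : (Fin 2 → ℝ) → Matrix (Fin 2) (Fin 2) ℝ}
    (hg : g = fun v => Matrix.diagonal (fun _ : Fin 2 => 1 * Real.exp (a v) + c₂))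
    {u : Fin 2 → ℝ} (hu : u ∈ U) :
    riemannUp g 0 1 1 0 u =
      Real.exp (a u) * (pd (pd a 0) 0 u + pd (pd a 1) 1 u) / 2
        + c₂ * Real.exp (a u) * (pd a 0 u ^ 2 + pd a 1 u ^ 2)
            / (2 * (Real.exp (a u) + c₂)) := by
  have hca : ContDiffAt ℝ (⊤ : ℕ∞) a u := ha.contDiffAt (hU.mem_nhds hu)
  have hd : DifferentiableAt ℝ a u := hca.differentiableAt (by simp)
  have hfu : 1 * Real.exp (a u) + c₂ ≠ 0 := by positivity
  subst hg
  have hE : ∀ i j k : Fin 2,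
      christoffelLow (fun v => Matrix.diagonal (fun _ : Fin 2 => 1 * Real.exp (a v) + c₂)) i j k
        =ᶠ[nhds u] Gam a c₂ i j k := by
    intro i j k
    filter_upwards [hU.mem_nhds hu] with v hv
    exact christoffelLow_diag a 1 c₂ rfl
      ((ha.contDiffAt (hU.mem_nhds hv)).differentiableAt (by simp)) (by positivity) i j k
  simp only [riemannUp, Fin.sum_univ_two, Matrix.diagonal_apply, reduceIte, zero_mul,
    add_zero, zero_add]
  simp only [riemannLow, Fin.sum_univ_two]
  rw [pd_congr (hE 1 0 0) 1, pd_congr (hE 1 0 1) 0,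
    pd_Gam hca hfu 1 0 0 1, pd_Gam hca hfu 1 0 1 0]
  simp only [christoffelLow_diag a 1 c₂ rfl hd hfu]
  norm_num
  field_simp
  ring

end LiouvilleAux
/-- for a solution `a` of the Liouville equation, the metrics
`g₁^{ij} = e^{a} δ^{ij}` (of constant curvature `K`) and `g₂^{ij} = δ^{ij}` (flat) are
always almost compatible; if they are compatible then `a` is constant and `K = 0`. -/
theorem liouville_conformal_almost_compatible
    (U : Set (Fin 2 → ℝ)) (hUopen : IsOpen U) (hUne : U.Nonempty)
    (hUconn : IsConnected U) (K : ℝ)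
    (a : (Fin 2 → ℝ) → ℝ) (ha : ContDiffOn ℝ (⊤ : ℕ∞) a U)
    (hliouville : ∀ u ∈ U,
      pd (fun w => pd a 0 w) 0 u + pd (fun w => pd a 1 w) 1 u =
        2 * K * Real.exp (-a u)) :
    AlmostCompatibleOn U
        (fun u => Matrix.diagonal (fun _ : Fin 2 => Real.exp (a u)))
        (fun _ => (1 : Matrix (Fin 2) (Fin 2) ℝ)) ∧
      (CompatibleOn U
          (fun u => Matrix.diagonal (fun _ : Fin 2 => Real.exp (a u)))
          (fun _ => (1 : Matrix (Fin 2) (Fin 2) ℝ)) →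
        (∀ u ∈ U, ∀ u' ∈ U, a u = a u') ∧ K = 0) := by
  have hCA : ∀ u ∈ U, ContDiffAt ℝ (⊤ : ℕ∞) a u := fun u hu => ha.contDiffAt (hUopen.mem_nhds hu)
  have hg1 : (fun u => Matrix.diagonal (fun _ : Fin 2 => Real.exp (a u)))
      = fun v => Matrix.diagonal (fun _ : Fin 2 => 1 * Real.exp (a v) + 0) := by
    funext v; simp
  have hg2 : (fun _ : Fin 2 → ℝ => (1 : Matrix (Fin 2) (Fin 2) ℝ))
      = fun v => Matrix.diagonal (fun _ : Fin 2 => 0 * Real.exp (a v) + 1) := by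
    funext v; simp
  constructor
  · -- almost compatibility
    intro l₁ l₂ hunit u hu i j k
    have hd : DifferentiableAt ℝ a u := (hCA u hu).differentiableAt (by simp)
    have hg : (fun v => l₁ • Matrix.diagonal (fun _ : Fin 2 => Real.exp (a v))
          + l₂ • (1 : Matrix (Fin 2) (Fin 2) ℝ))
        = fun v => Matrix.diagonal (fun _ : Fin 2 => l₁ * Real.exp (a v) + l₂) := by
      funext v
      ext s t
      rcases eq_or_ne s t with rfl | hst
      · simp [Matrix.diagonal_apply, Matrix.one_apply]
      · simp [Matrix.diagonal_apply, Matrix.one_apply, hst]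
    have hfne : l₁ * Real.exp (a u) + l₂ ≠ 0 := by
      have h := hunit u hu
      rw [show l₁ • Matrix.diagonal (fun _ : Fin 2 => Real.exp (a u))
            + l₂ • (1 : Matrix (Fin 2) (Fin 2) ℝ)
          = Matrix.diagonal (fun _ : Fin 2 => l₁ * Real.exp (a u) + l₂) from congrFun hg u,
        Matrix.det_diagonal, Fin.prod_univ_two] at h
      exact (mul_ne_zero_iff.mp (isUnit_iff_ne_zero.mp h)).1
    rw [christoffelUp_diag a l₁ l₂ hg hd hfne,
      christoffelUp_diag a 1 0 hg1 hd (by positivity),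
      christoffelUp_diag a 0 1 hg2 hd (by norm_num)]
    ring
  · -- compatibility implies constancy
    intro hcomp
    have hgsum : (fun v => (1:ℝ) • Matrix.diagonal (fun _ : Fin 2 => Real.exp (a v))
          + (1:ℝ) • (1 : Matrix (Fin 2) (Fin 2) ℝ))
        = fun v => Matrix.diagonal (fun _ : Fin 2 => 1 * Real.exp (a v) + 1) := by
      funext v
      ext s t
      rcases eq_or_ne s t with rfl | hst
      · simp [Matrix.diagonal_apply, Matrix.one_apply]
      · simp [Matrix.diagonal_apply, Matrix.one_apply, hst]
    have hunit : ∀ v ∈ U, IsUnit ((1:ℝ) • Matrix.diagonal (fun _ : Fin 2 => Real.exp (a v))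
        + (1:ℝ) • (1 : Matrix (Fin 2) (Fin 2) ℝ)).det := by
      intro v _
      rw [show (1:ℝ) • Matrix.diagonal (fun _ : Fin 2 => Real.exp (a v))
            + (1:ℝ) • (1 : Matrix (Fin 2) (Fin 2) ℝ)
          = Matrix.diagonal (fun _ : Fin 2 => 1 * Real.exp (a v) + 1) from congrFun hgsum v,
        Matrix.det_diagonal, Fin.prod_univ_two]
      have hpos : (0:ℝ) < 1 * Real.exp (a v) + 1 := by positivity
      exact isUnit_iff_ne_zero.mpr (mul_pos hpos hpos).ne'
    have hgrad : ∀ u ∈ U, pd a 0 u = 0 ∧ pd a 1 u = 0 := by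
      intro u hu
      have h := (hcomp 1 1 hunit u hu).2 0 1 1 0
      rw [riemannUp_diag hUopen ha 1 zero_le_one hgsum hu,
        riemannUp_diag hUopen ha 0 le_rfl hg1 hu,
        riemannUp_one] at h
      have hE := Real.exp_pos (a u)
      have hS2 : pd a 0 u ^ 2 + pd a 1 u ^ 2 = 0 := by
        have hE1 : (0:ℝ) < Real.exp (a u) + 1 := by positivity
        field_simp at h
        have h3 : Real.exp (a u) ^ 2 * (pd a 0 u ^ 2 + pd a 1 u ^ 2) = 0 := by linear_combination h
        exact (mul_eq_zero.mp h3).resolve_left (by positivity)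
      constructor
      · have h0 : pd a 0 u ^ 2 = 0 := by nlinarith [sq_nonneg (pd a 0 u), sq_nonneg (pd a 1 u)]
        exact pow_eq_zero_iff two_ne_zero |>.mp h0
      · have h1 : pd a 1 u ^ 2 = 0 := by nlinarith [sq_nonneg (pd a 0 u), sq_nonneg (pd a 1 u)]
        exact pow_eq_zero_iff two_ne_zero |>.mp h1
    have hK : K = 0 := by
      obtain ⟨u₀, hu₀⟩ := hUne
      have hB0 : pd (fun w => pd a 0 w) 0 u₀ = 0 := by
        rw [pd_congr (f := fun w => pd a 0 w) (g := fun _ => (0:ℝ))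
          (by filter_upwards [hUopen.mem_nhds hu₀] with v hv; exact (hgrad v hv).1) 0]
        exact pd_const 0 0
      have hB1 : pd (fun w => pd a 1 w) 1 u₀ = 0 := by
        rw [pd_congr (f := fun w => pd a 1 w) (g := fun _ => (0:ℝ))
          (by filter_upwards [hUopen.mem_nhds hu₀] with v hv; exact (hgrad v hv).2) 1]
        exact pd_const 0 1
      have hl := hliouville u₀ hu₀
      rw [hB0, hB1] at hl
      have h2 : K * Real.exp (-a u₀) = 0 := by linarith
      rcases mul_eq_zero.mp h2 with h | h
      · exact h
      · exact absurd h (Real.exp_ne_zero _)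
    refine ⟨?_, hK⟩
    have hfz : ∀ v ∈ U, fderiv ℝ a v = 0 := by
      intro v hv
      ext w
      have hw : w = w 0 • (Pi.single (0 : Fin 2) (1:ℝ) : Fin 2 → ℝ)
          + w 1 • (Pi.single (1 : Fin 2) (1:ℝ) : Fin 2 → ℝ) := by
        funext t; fin_cases t <;> simp [Pi.single_apply]
      rw [hw, map_add, map_smul, map_smul]
      have h0 : fderiv ℝ a v (Pi.single 0 1) = 0 := (hgrad v hv).1
      have h1 : fderiv ℝ a v (Pi.single 1 1) = 0 := (hgrad v hv).2
      simp [h0, h1]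
    have key : ∀ u ∈ U, ∀ᶠ v in nhds u, a v = a u := by
      intro u hu
      obtain ⟨ε, hε, hball⟩ := Metric.isOpen_iff.1 hUopen u hu
      have hdiff : DifferentiableOn ℝ a (Metric.ball u ε) := fun v hv =>
        ((hCA v (hball hv)).differentiableAt (by simp)).differentiableWithinAt
      have hfz' : ∀ v ∈ Metric.ball u ε, fderivWithin ℝ a (Metric.ball u ε) v = 0 := by
        intro v hv
        rw [fderivWithin_of_isOpen Metric.isOpen_ball hv]
        exact hfz v (hball hv)
      filter_upwards [Metric.ball_mem_nhds u hε] with v hv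
      exact (convex_ball u ε).is_const_of_fderivWithin_eq_zero hdiff hfz' hv
        (Metric.mem_ball_self hε)
    intro u hu u' hu'
    haveI : PreconnectedSpace U := Subtype.preconnectedSpace hUconn.isPreconnected
    have hlc : IsLocallyConstant (fun x : U => a x.1) := by
      rw [IsLocallyConstant.iff_eventually_eq]
      intro x
      exact (continuous_subtype_val.tendsto x).eventually (key x.1 x.2)
    exact hlc.apply_eq_of_preconnectedSpace ⟨u, hu⟩ ⟨u', hu'⟩
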